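/- arXiv:2506.17069 — 2 statements merged into one kernel-verified Lean document; each statement's English description precedes it below -/
import Mathlib

section
/- The map Q ↦ [Q]_α from S_{α+n} to Π_α is constant on double cosets S_n·g·S_n, and two permutations Q, Q' ∈ S_{α+n} lie in the same double coset with respect to S_n if and only if [Q]_α = [Q']_α. -/
open Equiv

/-- The subgroup `S_n ⊆ S_{α+n}` of permutations fixing `{1,…,α}` pointwise. -/
def fixFirst (α n : ℕ) : Subgroup (Perm (Fin (α + n))) :=
  fixingSubgroup (Perm (Fin (α + n))) {i : Fin (α + n) | (i : ℕ) < α}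

/-- The upper-left `α×α` corner of (the permutation matrix of) `Q ∈ S_{α+n}`,
viewed as a partial map `Fin α → Option (Fin α)`. -/
def corner (α n : ℕ) (Q : Perm (Fin (α + n))) (i : Fin α) : Option (Fin α) :=
  if h : ((Q (Fin.castAdd n i)) : ℕ) < α then some ⟨(Q (Fin.castAdd n i) : ℕ), h⟩ else none

/-!
`Q` and `Q'` lie in the same double coset of the fixer `H` of a finite set `A` iff they induce
the same partial map `A ⇀ A`, namely `a ↦ Q a` when `Q a ∈ A`; for `A = {1,…,α}` this partial
map is the corner `[Q]_α`. If `Q' = k₁ Q k₂` with `k₁, k₂ ∈ H`, then `Q' a = k₁ (Q a)` on `A`,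
and `k₁` preserves both `A` and its complement. Conversely it suffices to find `k ∈ H` with
`k (Q a) = Q' a` on `A`, since then `k₂ = Q⁻¹ k⁻¹ Q' ∈ H`; such a `k` extends the injective
finite prescription "identity on `A`, and `Q a ↦ Q' a` whenever `Q a ∉ A`".
-/

namespace Equiv.Perm

variable {X : Type*} {A : Set X} {Q Q' : Perm X}

theorem mem_fixingSubgroup_iff_apply_eq {k : Perm X} :
    k ∈ fixingSubgroup (Perm X) A ↔ ∀ a ∈ A, k a = a :=
  mem_fixingSubgroup_iff _

theorem exists_fixingSubgroup_mul_mul_eq_iff_exists_apply_eq :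
    (∃ k₁ ∈ fixingSubgroup (Perm X) A, ∃ k₂ ∈ fixingSubgroup (Perm X) A, Q' = k₁ * Q * k₂) ↔
      ∃ k ∈ fixingSubgroup (Perm X) A, ∀ a ∈ A, k (Q a) = Q' a := by
  simp only [mem_fixingSubgroup_iff_apply_eq]
  constructor
  · rintro ⟨k₁, hk₁, k₂, hk₂, rfl⟩
    exact ⟨k₁, hk₁, fun a ha => by simp [hk₂ a ha]⟩
  · rintro ⟨k, hk, hkQ⟩
    refine ⟨k, hk, Q⁻¹ * k⁻¹ * Q', fun a ha => ?_, by group⟩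
    simp [← hkQ a ha]

theorem exists_mem_fixingSubgroup_apply_eq (hA : A.Finite)
    (hQQ' : ∀ a ∈ A, ∀ b ∈ A, Q a = b ↔ Q' a = b) :
    ∃ k ∈ fixingSubgroup (Perm X) A, ∀ a ∈ A, k (Q a) = Q' a := by
  have := hA.to_subtype
  let f : A ⊕ {a : A // Q a ∉ A} → X := Sum.elim (↑) (fun a => Q a)
  let g : A ⊕ {a : A // Q a ∉ A} → X := Sum.elim (↑) (fun a => Q' a)
  have hQ'_notMem (a : {a : A // Q a ∉ A}) : Q' a ∉ A := fun h =>
    a.2 (((hQQ' a a.1.2 _ h).mpr rfl) ▸ h)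
  have hf : f.Injective := Subtype.val_injective.sumElim
    (Q.injective.comp (Subtype.val_injective.comp Subtype.val_injective))
    fun a b h => b.2 (h ▸ a.2)
  have hg : g.Injective := Subtype.val_injective.sumElim
    (Q'.injective.comp (Subtype.val_injective.comp Subtype.val_injective))
    fun a b h => hQ'_notMem b (h ▸ a.2)
  obtain ⟨k, hk⟩ := exists_extending_pair f g hf hg
  have hk_fix : ∀ a ∈ A, k a = a := fun a ha => hk (.inl ⟨a, ha⟩)
  refine ⟨k, mem_fixingSubgroup_iff_apply_eq.mpr hk_fix, fun a ha => ?_⟩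
  by_cases hQa : Q a ∈ A
  · rw [hk_fix _ hQa]
    exact ((hQQ' a ha _ hQa).mp rfl).symm
  · exact hk (.inr ⟨⟨a, ha⟩, hQa⟩)

theorem exists_mem_fixingSubgroup_apply_eq_iff (hA : A.Finite) :
    (∃ k ∈ fixingSubgroup (Perm X) A, ∀ a ∈ A, k (Q a) = Q' a) ↔
      ∀ a ∈ A, ∀ b ∈ A, Q a = b ↔ Q' a = b := by
  refine ⟨?_, exists_mem_fixingSubgroup_apply_eq hA⟩
  rintro ⟨k, hk, hkQ⟩ a ha b hb
  have hkb : k b = b := mem_fixingSubgroup_iff_apply_eq.mp hk b hb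
  rw [← hkQ a ha, ← hkb, k.apply_eq_iff_eq, hkb]

theorem exists_fixingSubgroup_mul_mul_eq_iff (hA : A.Finite) :
    (∃ k₁ ∈ fixingSubgroup (Perm X) A, ∃ k₂ ∈ fixingSubgroup (Perm X) A, Q' = k₁ * Q * k₂) ↔
      ∀ a ∈ A, ∀ b ∈ A, Q a = b ↔ Q' a = b := by
  rw [exists_fixingSubgroup_mul_mul_eq_iff_exists_apply_eq,
    exists_mem_fixingSubgroup_apply_eq_iff hA]

end Equiv.Perm

theorem corner_eq_some_iff {α n : ℕ} (Q : Perm (Fin (α + n))) (i j : Fin α) :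
    corner α n Q i = some j ↔ Q (Fin.castAdd n i) = Fin.castAdd n j := by
  unfold corner
  split_ifs with h
  · simp [Fin.ext_iff]
  · simp only [false_iff]
    rintro hQ
    exact h (hQ ▸ j.2)

theorem corner_eq_corner_iff {α n : ℕ} (Q Q' : Perm (Fin (α + n))) :
    corner α n Q = corner α n Q' ↔ ∀ a ∈ {i : Fin (α + n) | (i : ℕ) < α},
      ∀ b ∈ {i : Fin (α + n) | (i : ℕ) < α}, Q a = b ↔ Q' a = b := by
  have hrange : {i : Fin (α + n) | (i : ℕ) < α} = Set.range (Fin.castAdd n) := by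
    ext i
    exact ⟨fun h => ⟨i.castLT h, Fin.castAdd_castLT n i h⟩, by rintro ⟨j, rfl⟩; exact j.2⟩
  simp only [hrange, Set.forall_mem_range, funext_iff]
  refine forall_congr' fun i => ?_
  rw [Option.ext_iff]
  simp only [corner_eq_some_iff]

/-- `Q ↦ [Q]_α` is constant on double cosets `S_n·g·S_n`, and `Q, Q'` lie in the
same double coset with respect to `S_n` if and only if `[Q]_α = [Q']_α`. -/
theorem doset_eq_iff_corner_eq (α n : ℕ) (Q Q' : Perm (Fin (α + n))) :
    (∃ k₁ ∈ fixFirst α n, ∃ k₂ ∈ fixFirst α n, Q' = k₁ * Q * k₂) ↔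
      corner α n Q = corner α n Q' := by
  rw [corner_eq_corner_iff, ← Perm.exists_fixingSubgroup_mul_mul_eq_iff (Set.toFinite _)]
  rfl
end

section
/- In C[S_n\S_{α+n}/S_n], for distinct i, j ≤ α one has θ_j·θ_i = θ_{ij} + a((i j))·θ_j, where θ_{ij} := (1/n!)·Σ_{g ∈ S_n T_{ij} S_n} δ_g and T_{ij} is any permutation in S_{α+n} whose α-corner is the partial identity vanishing at i and j. -/
open Equiv

noncomputable section

/-- The double coset `S_n · t · S_n` in `S_{α+n}`, as a finset. -/
def dcos (α n : ℕ) (t : Perm (Fin (α + n))) : Finset (Perm (Fin (α + n))) :=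
  (Set.toFinite {h | ∃ k₁ ∈ fixFirst α n, ∃ k₂ ∈ fixFirst α n, h = k₁ * t * k₂}).toFinset

/-- `(1/n!)·Σ_{h ∈ S_n t S_n} δ_h` in the group algebra `C[S_{α+n}]`. -/
def dosetElt (α n : ℕ) (t : Perm (Fin (α + n))) : MonoidAlgebra ℂ (Perm (Fin (α + n))) :=
  ((Nat.factorial n : ℂ))⁻¹ • ∑ h ∈ dcos α n t, MonoidAlgebra.single h 1

/-- `θ_i = (1/n!)·Σ_{h ∈ S_n (i,α+1) S_n} δ_h`, where `(i, α+1)` is the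
transposition of `i ≤ α` with `α+1` (0-based: of `i < α` with `α`). -/
def theta (α n : ℕ) (hn : 0 < n) (i : Fin α) : MonoidAlgebra ℂ (Perm (Fin (α + n))) :=
  dosetElt α n (Equiv.swap (Fin.castAdd n i) ⟨α, by omega⟩)

/-- `a(g) = (1/n!)·Σ_{σ ∈ S_n} δ_{gσ}` for `g ∈ S_α ⊆ S_{α+n}`. -/
def aElt (α n : ℕ) (g : Perm (Fin α)) : MonoidAlgebra ℂ (Perm (Fin (α + n))) :=
  ((Nat.factorial n : ℂ))⁻¹ • ∑ σ ∈ (Set.toFinite (fixFirst α n : Set (Perm (Fin (α + n))))).toFinset,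
    MonoidAlgebra.single (Perm.viaFintypeEmbedding g (Fin.castAddEmb n) * σ) 1

/-- The unit `(1/n!)·Σ_{k ∈ S_n} δ_k` of the double coset algebra. -/
def unitK (α n : ℕ) : MonoidAlgebra ℂ (Perm (Fin (α + n))) :=
  ((Nat.factorial n : ℂ))⁻¹ • ∑ σ ∈ (Set.toFinite (fixFirst α n : Set (Perm (Fin (α + n))))).toFinset,
    MonoidAlgebra.single σ 1

end

/-! With `e = (1/n!) Σ_{k ∈ S_n} δ_k`, every double coset element `(1/n!) Σ_{g ∈ S_n t S_n} δ_g`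
is the multiple `n! / |S_n ∩ t S_n t⁻¹|` of `e δ_t e`, so `θ_i = n · e δ_{tᵢ} e` and
`θ_{ij} = n(n-1) · e δ_{T} e`, where `tᵢ = (i, α+1)` and `T = (i, α+1)(j, α+2)`. Then
`θ_j θ_i = (n²/n!) Σ_{k ∈ S_n} e δ_{tⱼ k tᵢ} e`. If `k` fixes `α+1` it commutes with `tᵢ, tⱼ` and
`tⱼ tᵢ = (i j) tⱼ`, so the summand is `e δ_{(i j) tⱼ} e`; there are `(n-1)!` such `k`.
Otherwise `tⱼ k tᵢ ∈ S_n T S_n` and the summand is `e δ_T e`. Since `(i j)` commutes with `S_n`,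
`a((i j)) θ_j = n · e δ_{(i j) tⱼ} e`, and comparing coefficients gives the identity. -/

open MonoidAlgebra Pointwise

theorem fixingSubgroup_inf_map_conj {M X : Type*} [Group M] [MulAction M X] (s : Set X) (g : M) :
    fixingSubgroup M s ⊓ (fixingSubgroup M s).map (MulAut.conj g).toMonoidHom =
      fixingSubgroup M (s ∪ g • s) := by
  rw [fixingSubgroup_union, SubMulAction.fixingSubgroup_smul_eq_fixingSubgroup_map_conj]

namespace Subgroup

theorem mem_map_conj_iff {G : Type*} [Group G] {K : Subgroup G} {t c : G} :
    c ∈ K.map (MulAut.conj t).toMonoidHom ↔ t⁻¹ * c * t ∈ K := by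
  rw [mem_map_equiv, MulAut.conj_symm_apply]

variable (𝕜 : Type*) {G : Type*} [Field 𝕜] [Group G] [Finite G] (K : Subgroup G)

noncomputable def average : MonoidAlgebra 𝕜 G :=
  (Nat.card K : 𝕜)⁻¹ • ∑ k ∈ (Set.toFinite (K : Set G)).toFinset, single k 1

noncomputable def sandwich (t : G) : MonoidAlgebra 𝕜 G :=
  K.average 𝕜 * single t 1 * K.average 𝕜

noncomputable def doubleCosetSum (t : G) : MonoidAlgebra 𝕜 G :=
  ∑ h ∈ (Set.toFinite {h | ∃ k₁ ∈ K, ∃ k₂ ∈ K, h = k₁ * t * k₂}).toFinset, single h 1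

variable {𝕜 K}

theorem card_finite_toFinset : (Set.toFinite (K : Set G)).toFinset.card = Nat.card K :=
  (Nat.card_eq_card_finite_toFinset _).symm

theorem single_mul_average {k : G} (hk : k ∈ K) :
    single k (1 : 𝕜) * K.average 𝕜 = K.average 𝕜 := by
  rw [average, mul_smul_comm, Finset.mul_sum]
  congr 1
  refine Finset.sum_equiv (Equiv.mulLeft k) (fun g => ?_) (fun g _ => ?_)
  · simp [K.mul_mem_cancel_left hk]
  · rw [single_mul_single, one_mul]
    rfl

theorem average_mul_single {k : G} (hk : k ∈ K) :
    K.average 𝕜 * single k (1 : 𝕜) = K.average 𝕜 := by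
  rw [average, smul_mul_assoc, Finset.sum_mul]
  congr 1
  refine Finset.sum_equiv (Equiv.mulRight k) (fun g => ?_) (fun g _ => ?_)
  · simp [K.mul_mem_cancel_right hk]
  · rw [single_mul_single, one_mul]
    rfl

theorem average_mul_average [CharZero 𝕜] : K.average 𝕜 * K.average 𝕜 = K.average 𝕜 := by
  conv_lhs => enter [1]; rw [average]
  rw [smul_mul_assoc, Finset.sum_mul,
    Finset.sum_congr rfl fun k hk => single_mul_average ((Set.Finite.mem_toFinset _).mp hk),
    Finset.sum_const, card_finite_toFinset, ← Nat.cast_smul_eq_nsmul 𝕜, smul_smul,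
    inv_mul_cancel₀ (Nat.cast_ne_zero.mpr Nat.card_pos.ne'), one_smul]

theorem commute_single_average {g : G} (hg : ∀ k ∈ K, Commute g k) :
    Commute (single g (1 : 𝕜)) (K.average 𝕜) := by
  rw [Commute, SemiconjBy, average, mul_smul_comm, smul_mul_assoc, Finset.mul_sum, Finset.sum_mul]
  refine congrArg _ (Finset.sum_congr rfl fun k hk => ?_)
  rw [single_mul_single, single_mul_single, (hg k ((Set.Finite.mem_toFinset _).mp hk)).eq]

theorem sandwich_mul_mul {k₁ k₂ : G} (hk₁ : k₁ ∈ K) (hk₂ : k₂ ∈ K) (t : G) :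
    K.sandwich 𝕜 (k₁ * t * k₂) = K.sandwich 𝕜 t := by
  rw [sandwich, sandwich,
    show single (k₁ * t * k₂) (1 : 𝕜) = single k₁ 1 * single t 1 * single k₂ 1 by
      simp only [single_mul_single, one_mul]]
  simp only [mul_assoc]
  rw [single_mul_average hk₂, ← mul_assoc, average_mul_single hk₁]

theorem single_mul_average_mul_sandwich [CharZero 𝕜] {g : G} (hg : ∀ k ∈ K, Commute g k)
    (t : G) : single g (1 : 𝕜) * K.average 𝕜 * K.sandwich 𝕜 t = K.sandwich 𝕜 (g * t) := by
  calc single g (1 : 𝕜) * K.average 𝕜 * K.sandwich 𝕜 t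
      = single g 1 * (K.average 𝕜 * K.average 𝕜) * single t 1 * K.average 𝕜 := by
        simp only [sandwich, mul_assoc]
    _ = K.average 𝕜 * (single g 1 * single t 1) * K.average 𝕜 := by
      rw [average_mul_average, (commute_single_average hg).eq, mul_assoc (K.average 𝕜)]
    _ = K.sandwich 𝕜 (g * t) := by rw [single_mul_single, one_mul, sandwich]

theorem sandwich_mul_sandwich [CharZero 𝕜] (a b : G) :
    K.sandwich 𝕜 a * K.sandwich 𝕜 b =
      (Nat.card K : 𝕜)⁻¹ • ∑ k ∈ (Set.toFinite (K : Set G)).toFinset, K.sandwich 𝕜 (a * k * b) := by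
  have hcollapse : K.sandwich 𝕜 a * K.sandwich 𝕜 b =
      K.average 𝕜 * single a 1 * K.average 𝕜 * single b 1 * K.average 𝕜 := by
    simp only [sandwich, ← mul_assoc]
    rw [mul_assoc _ (K.average 𝕜) (K.average 𝕜), average_mul_average]
  rw [hcollapse]
  conv_lhs => enter [1, 1, 2]; rw [average]
  simp only [sandwich, mul_smul_comm, smul_mul_assoc, Finset.mul_sum, Finset.sum_mul, mul_assoc,
    single_mul_single, one_mul]

/-- The fibre of `(k₁, k₂) ↦ k₁ * t * k₂` over a point of `K t K` is a torsor under
`K ∩ t K t⁻¹`. -/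
theorem card_fiber_mul_mul_eq [DecidableEq G] {t h : G}
    (hh : ∃ k₁ ∈ K, ∃ k₂ ∈ K, h = k₁ * t * k₂) :
    (((Set.toFinite (K : Set G)).toFinset ×ˢ (Set.toFinite (K : Set G)).toFinset).filter
      (fun p : G × G => p.1 * t * p.2 = h)).card =
      Nat.card ↥(K ⊓ K.map (MulAut.conj t).toMonoidHom) := by
  obtain ⟨k₁, hk₁, k₂, hk₂, rfl⟩ := hh
  rw [← card_finite_toFinset]
  refine Finset.card_bij' (fun p _ => k₁⁻¹ * p.1) (fun c _ => (k₁ * c, t⁻¹ * c⁻¹ * t * k₂))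
    ?_ ?_ ?_ ?_
  · intro p hp
    simp only [Finset.mem_filter, Finset.mem_product, Set.Finite.mem_toFinset,
      SetLike.mem_coe] at hp
    obtain ⟨⟨h1, h2⟩, heq⟩ := hp
    have hconj : t⁻¹ * (k₁⁻¹ * p.1) * t = k₂ * p.2⁻¹ := by
      rw [show p.1 = k₁ * t * k₂ * p.2⁻¹ * t⁻¹ by rw [← heq]; group]
      group
    simp only [Set.Finite.mem_toFinset, SetLike.mem_coe, mem_inf, mem_map_conj_iff, hconj]
    exact ⟨K.mul_mem (K.inv_mem hk₁) h1, K.mul_mem hk₂ (K.inv_mem h2)⟩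
  · intro c hc
    simp only [Set.Finite.mem_toFinset, SetLike.mem_coe, mem_inf, mem_map_conj_iff] at hc
    simp only [Finset.mem_filter, Finset.mem_product, Set.Finite.mem_toFinset, SetLike.mem_coe]
    refine ⟨⟨K.mul_mem hk₁ hc.1, K.mul_mem ?_ hk₂⟩, by group⟩
    simpa [mul_assoc] using K.inv_mem hc.2
  · intro p hp
    have heq := (Finset.mem_filter.mp hp).2
    ext
    · simp
    · rw [show t⁻¹ * (k₁⁻¹ * p.1)⁻¹ * t * k₂ = (p.1 * t)⁻¹ * (k₁ * t * k₂) by group, ← heq]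
      group
  · intro c _
    simp

theorem sum_single_mul_mul_eq_card_nsmul_doubleCosetSum (t : G) :
    ∑ p ∈ (Set.toFinite (K : Set G)).toFinset ×ˢ (Set.toFinite (K : Set G)).toFinset,
      single (p.1 * t * p.2) (1 : 𝕜) =
      Nat.card ↥(K ⊓ K.map (MulAut.conj t).toMonoidHom) • K.doubleCosetSum 𝕜 t := by
  classical
  rw [doubleCosetSum, Finset.smul_sum,
    ← Finset.sum_fiberwise_of_maps_to (g := fun p => p.1 * t * p.2)
      (t := (Set.toFinite {h | ∃ k₁ ∈ K, ∃ k₂ ∈ K, h = k₁ * t * k₂}).toFinset)]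
  · refine Finset.sum_congr rfl fun h hh => ?_
    have hh' : ∃ k₁ ∈ K, ∃ k₂ ∈ K, h = k₁ * t * k₂ := by simpa using hh
    rw [Finset.sum_congr rfl fun p hp => by rw [(Finset.mem_filter.mp hp).2], Finset.sum_const,
      card_fiber_mul_mul_eq hh']
  · intro p hp
    simp only [Finset.mem_product, Set.Finite.mem_toFinset, SetLike.mem_coe] at hp
    simp only [Set.Finite.mem_toFinset, Set.mem_ofPred_eq]
    exact ⟨p.1, hp.1, p.2, hp.2, rfl⟩

theorem sandwich_eq_smul_doubleCosetSum [CharZero 𝕜] (t : G) :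
    K.sandwich 𝕜 t =
      ((Nat.card ↥(K ⊓ K.map (MulAut.conj t).toMonoidHom) : 𝕜) / Nat.card K ^ 2) •
        K.doubleCosetSum 𝕜 t := by
  have hexpand : K.sandwich 𝕜 t = (Nat.card K : 𝕜)⁻¹ • (Nat.card K : 𝕜)⁻¹ •
      ∑ p ∈ (Set.toFinite (K : Set G)).toFinset ×ˢ (Set.toFinite (K : Set G)).toFinset,
        single (p.1 * t * p.2) (1 : 𝕜) := by
    simp only [sandwich, average, smul_mul_assoc, mul_smul_comm, Finset.sum_mul, Finset.mul_sum,
      Finset.sum_product, single_mul_single, one_mul]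
    rw [← Finset.smul_sum, Finset.sum_comm]
  rw [hexpand, sum_single_mul_mul_eq_card_nsmul_doubleCosetSum, ← Nat.cast_smul_eq_nsmul 𝕜,
    smul_smul, smul_smul]
  congr 1
  ring

theorem inv_card_smul_doubleCosetSum [CharZero 𝕜] (t : G) :
    (Nat.card K : 𝕜)⁻¹ • K.doubleCosetSum 𝕜 t =
      ((Nat.card K : 𝕜) / Nat.card ↥(K ⊓ K.map (MulAut.conj t).toMonoidHom)) • K.sandwich 𝕜 t := by
  have hK : (Nat.card K : 𝕜) ≠ 0 := Nat.cast_ne_zero.mpr Nat.card_pos.ne'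
  have hKt : (Nat.card ↥(K ⊓ K.map (MulAut.conj t).toMonoidHom) : 𝕜) ≠ 0 :=
    Nat.cast_ne_zero.mpr Nat.card_pos.ne'
  rw [sandwich_eq_smul_doubleCosetSum, smul_smul]
  congr 1
  field_simp

theorem sum_eq_card_nsmul_add_card_sub_nsmul {M : Type*} [AddCommMonoid M] {K' : Subgroup G}
    (hK' : K' ≤ K) {f : G → M} {a b : M} (ha : ∀ k ∈ K', f k = a)
    (hb : ∀ k ∈ K, k ∉ K' → f k = b) :
    ∑ k ∈ (Set.toFinite (K : Set G)).toFinset, f k =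
      Nat.card K' • a + (Nat.card K - Nat.card K') • b := by
  classical
  have hfilter : (Set.toFinite (K : Set G)).toFinset.filter (· ∈ K') =
      (Set.toFinite (K' : Set G)).toFinset := by
    ext k
    simpa using fun hk => hK' hk
  have hcard := Finset.card_filter_add_card_filter_not (s := (Set.toFinite (K : Set G)).toFinset)
    (p := (· ∈ K'))
  rw [hfilter, card_finite_toFinset, card_finite_toFinset] at hcard
  rw [← Finset.sum_filter_add_sum_filter_not _ (· ∈ K'),
    Finset.sum_congr rfl fun k hk => ha k (Finset.mem_filter.mp hk).2,
    Finset.sum_congr rfl fun k hk => hb k (by simpa using (Finset.mem_filter.mp hk).1)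
      (Finset.mem_filter.mp hk).2,
    Finset.sum_const, Finset.sum_const, hfilter, card_finite_toFinset]
  congr 2
  omega

end Subgroup

namespace Equiv.Perm

theorem card_fixingSubgroup {X : Type*} [Finite X] (s : Set X) :
    Nat.card (fixingSubgroup (Perm X) s) = (Nat.card ↥sᶜ).factorial := by
  classical
  have : Fintype X := Fintype.ofFinite X
  rw [← Nat.card_perm, Nat.card_congr]
  refine (Perm.subtypeEquivSubtypePerm (· ∈ sᶜ)).trans (subtypeEquivRight fun f => ?_) |>.symm
  simp [mem_fixingSubgroup_iff]

variable {X : Type*} [DecidableEq X]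

theorem commute_swap_of_apply_eq {f : Perm X} {x y : X} (hx : f x = x) (hy : f y = y) :
    Commute f (swap x y) := by
  rw [Commute, SemiconjBy, mul_swap_eq_swap_mul, hx, hy]

theorem viaFintypeEmbedding_swap {α : Type*} [Fintype α] [DecidableEq α] (f : α ↪ X) (x y : α) :
    (swap x y).viaFintypeEmbedding f = swap (f x) (f y) := by
  ext b
  by_cases hb : b ∈ Set.range f
  · obtain ⟨a, rfl⟩ := hb
    rw [viaFintypeEmbedding_apply_image, f.injective.map_swap]
  · rw [viaFintypeEmbedding_apply_notMem_range _ _ hb, swap_apply_of_ne_of_ne] <;>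
      rintro rfl <;> exact hb ⟨_, rfl⟩

variable {s : Set X} {ci cj a₀ a₁ : X}

theorem swap_mem_fixingSubgroup {x y : X} (hx : x ∉ s) (hy : y ∉ s) :
    swap x y ∈ fixingSubgroup (Perm X) s := by
  rw [mem_fixingSubgroup_iff]
  intro z hz
  exact swap_apply_of_ne_of_ne (fun h => hx (h ▸ hz)) (fun h => hy (h ▸ hz))

theorem union_swap_smul_eq_insert (hc : ci ∈ s) (ha : a₀ ∉ s) :
    s ∪ swap ci a₀ • s = insert a₀ s := by
  ext x
  rw [Set.mem_union, Set.mem_smul_set_iff_inv_smul_mem, swap_inv, Perm.smul_def,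
    Set.mem_insert_iff]
  by_cases hxs : x ∈ s
  · simp [hxs]
  obtain rfl | hx₀ := eq_or_ne x a₀
  · simp [hc]
  have hxc : x ≠ ci := fun h => hxs (h ▸ hc)
  simp [swap_apply_of_ne_of_ne hxc hx₀, hxs, hx₀]

theorem union_swap_mul_swap_smul_eq_insert (hci : ci ∈ s) (hcj : cj ∈ s) (ha₁ : a₁ ∉ s)
    (hij : ci ≠ cj) (ha : a₀ ≠ a₁) :
    s ∪ (swap ci a₀ * swap cj a₁) • s = insert a₀ (insert a₁ s) := by
  ext x
  rw [Set.mem_union, Set.mem_smul_set_iff_inv_smul_mem, mul_inv_rev, swap_inv, swap_inv,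
    Perm.smul_def, Perm.mul_apply, Set.mem_insert_iff, Set.mem_insert_iff]
  by_cases hxs : x ∈ s
  · simp [hxs]
  have hxi : x ≠ ci := fun h => hxs (h ▸ hci)
  have hxj : x ≠ cj := fun h => hxs (h ▸ hcj)
  obtain rfl | hx₀ := eq_or_ne x a₀
  · have hia₁ : ci ≠ a₁ := fun h => ha₁ (h ▸ hci)
    simp [swap_apply_of_ne_of_ne hij hia₁, hci]
  obtain rfl | hx₁ := eq_or_ne x a₁
  · simp [swap_apply_of_ne_of_ne hxi hx₀, hcj]
  simp [swap_apply_of_ne_of_ne hxi hx₀, swap_apply_of_ne_of_ne hxj hx₁, hxs, hx₀, hx₁]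

theorem swap_mul_mul_swap_of_mem_fixingSubgroup_insert (hci : ci ∈ s) (hcj : cj ∈ s)
    (ha₀ : a₀ ∉ s) (hij : ci ≠ cj) {k : Perm X}
    (hk : k ∈ fixingSubgroup (Perm X) (insert a₀ s)) :
    swap cj a₀ * k * swap ci a₀ = k * (swap ci cj * swap cj a₀) := by
  have hfix : ∀ x ∈ insert a₀ s, k x = x := (mem_fixingSubgroup_iff _).mp hk
  have hi₀ : ci ≠ a₀ := fun h => ha₀ (h ▸ hci)
  have hj₀ : cj ≠ a₀ := fun h => ha₀ (h ▸ hcj)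
  have hswaps : swap cj a₀ * swap ci a₀ = swap ci cj * swap cj a₀ := by
    ext x
    simp only [Perm.mul_apply, swap_apply_def]
    split_ifs <;> simp_all
  rw [← (commute_swap_of_apply_eq (hfix cj (.inr hcj)) (hfix a₀ (.inl rfl))).eq, mul_assoc,
    hswaps]

theorem swap_mul_mul_swap_mem_doubleCoset (hci : ci ∈ s) (hcj : cj ∈ s) (ha₀ : a₀ ∉ s)
    (ha₁ : a₁ ∉ s) (hij : ci ≠ cj) (ha : a₀ ≠ a₁) {k : Perm X}
    (hk : k ∈ fixingSubgroup (Perm X) s) (hk₀ : k a₀ ≠ a₀) :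
    ∃ k₁ ∈ fixingSubgroup (Perm X) s, ∃ k₂ ∈ fixingSubgroup (Perm X) s,
      swap cj a₀ * k * swap ci a₀ = k₁ * (swap ci a₀ * swap cj a₁) * k₂ := by
  have hfix : ∀ x ∈ s, k x = x := (mem_fixingSubgroup_iff _).mp hk
  have hb : k a₀ ∉ s := fun h => hk₀ (k.injective (hfix _ h))
  -- `k = σ (a₀ a₁) ρ`, where `σ` commutes with `(cj a₀)` and `ρ` with `(ci a₀)`.
  set σ := swap (k a₀) a₁
  set ρ := swap a₀ a₁ * σ * k
  have hρ : ρ ∈ fixingSubgroup (Perm X) s :=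
    mul_mem (mul_mem (swap_mem_fixingSubgroup ha₀ ha₁) (swap_mem_fixingSubgroup hb ha₁)) hk
  refine ⟨σ * swap a₀ a₁,
    mul_mem (swap_mem_fixingSubgroup hb ha₁) (swap_mem_fixingSubgroup ha₀ ha₁), ρ, hρ, ?_⟩
  have hk_eq : k = σ * swap a₀ a₁ * ρ := by simp [ρ, σ, ← mul_assoc]
  have hσ : Commute σ (swap cj a₀) := by
    refine commute_swap_of_apply_eq (swap_apply_of_ne_of_ne ?_ ?_)
      (swap_apply_of_ne_of_ne hk₀.symm ha)
    · exact fun h => hb (h ▸ hcj)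
    · exact fun h => ha₁ (h ▸ hcj)
  have hρc : Commute ρ (swap ci a₀) := by
    refine commute_swap_of_apply_eq ((mem_fixingSubgroup_iff _).mp hρ ci hci) ?_
    simp [ρ, σ]
  have hswaps :
      swap cj a₀ * swap a₀ a₁ * swap ci a₀ = swap a₀ a₁ * (swap ci a₀ * swap cj a₁) := by
    have hi₀ : ci ≠ a₀ := fun h => ha₀ (h ▸ hci)
    have hj₀ : cj ≠ a₀ := fun h => ha₀ (h ▸ hcj)
    have hi₁ : ci ≠ a₁ := fun h => ha₁ (h ▸ hci)
    have hj₁ : cj ≠ a₁ := fun h => ha₁ (h ▸ hcj)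
    ext x
    simp only [Perm.mul_apply]
    by_cases h₀ : x = a₀
    · subst h₀; simp [swap_apply_of_ne_of_ne, *, Ne.symm]
    by_cases h₁ : x = a₁
    · subst h₁; simp [swap_apply_of_ne_of_ne, *, Ne.symm]
    by_cases h₂ : x = ci
    · subst h₂; simp [swap_apply_of_ne_of_ne, *, Ne.symm]
    by_cases h₃ : x = cj
    · subst h₃; simp [swap_apply_of_ne_of_ne, *, Ne.symm]
    simp [swap_apply_of_ne_of_ne, *]
  calc swap cj a₀ * k * swap ci a₀
      = (swap cj a₀ * σ) * swap a₀ a₁ * (ρ * swap ci a₀) := by rw [hk_eq]; group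
    _ = σ * (swap cj a₀ * swap a₀ a₁ * swap ci a₀) * ρ := by rw [← hσ.eq, hρc.eq]; group
    _ = σ * swap a₀ a₁ * (swap ci a₀ * swap cj a₁) * ρ := by rw [hswaps]; group

end Equiv.Perm

open Equiv.Perm Subgroup

theorem card_fixingSubgroup_setOf_lt (m β : ℕ) :
    Nat.card (fixingSubgroup (Perm (Fin m)) {x : Fin m | (x : ℕ) < β}) = (m - β).factorial := by
  rw [card_fixingSubgroup, Nat.card_coe_set_eq, Set.ncard_compl, Nat.card_fin,
    Set.ncard_eq_toFinset_card', Set.toFinset_ofPred, Fin.card_filter_val_lt]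
  congr 1
  omega

theorem insert_setOf_lt {m β : ℕ} (h : β < m) :
    insert (⟨β, h⟩ : Fin m) {x : Fin m | (x : ℕ) < β} = {x : Fin m | (x : ℕ) < β + 1} := by
  ext x
  simp only [Set.mem_insert_iff, Set.mem_ofPred_eq, Fin.ext_iff]
  omega

section

variable {α n : ℕ}

theorem card_fixFirst : Nat.card (fixFirst α n) = n.factorial := by
  rw [fixFirst, card_fixingSubgroup_setOf_lt]
  congr 1
  omega

theorem dosetElt_eq_smul_sandwich (t : Perm (Fin (α + n))) :
    dosetElt α n t = ((n.factorial : ℂ) /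
      Nat.card ↥(fixFirst α n ⊓ (fixFirst α n).map (MulAut.conj t).toMonoidHom)) •
        (fixFirst α n).sandwich ℂ t := by
  rw [← card_fixFirst, ← inv_card_smul_doubleCosetSum, card_fixFirst]
  rfl

theorem aElt_eq (g : Perm (Fin α)) :
    aElt α n g =
      single (g.viaFintypeEmbedding (Fin.castAddEmb n)) 1 * (fixFirst α n).average ℂ := by
  rw [aElt, average, card_fixFirst, mul_smul_comm, Finset.mul_sum]
  simp only [single_mul_single, one_mul]

theorem card_fixFirst_inf_map_conj_swap (hn : 0 < n) (i : Fin α) :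
    Nat.card ↥(fixFirst α n ⊓ (fixFirst α n).map
      (MulAut.conj (swap (Fin.castAdd n i) ⟨α, by omega⟩)).toMonoidHom) = (n - 1).factorial := by
  rw [fixFirst, fixingSubgroup_inf_map_conj, union_swap_smul_eq_insert, insert_setOf_lt,
    card_fixingSubgroup_setOf_lt]
  · congr 1
    omega
  · exact i.isLt
  · simp

theorem card_fixFirst_inf_map_conj_swap_mul_swap (hn : 1 < n) {i j : Fin α} (hij : i ≠ j) :
    Nat.card ↥(fixFirst α n ⊓ (fixFirst α n).map (MulAut.conj (swap (Fin.castAdd n i)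
      ⟨α, by omega⟩ * swap (Fin.castAdd n j) ⟨α + 1, by omega⟩)).toMonoidHom) =
      (n - 2).factorial := by
  rw [fixFirst, fixingSubgroup_inf_map_conj, union_swap_mul_swap_smul_eq_insert, Set.insert_comm,
    insert_setOf_lt, insert_setOf_lt, card_fixingSubgroup_setOf_lt]
  · congr 1
    omega
  · exact i.isLt
  · exact j.isLt
  · simp
  · exact (Fin.castAdd_injective _ _).ne hij
  · simp [Fin.ext_iff]

theorem theta_eq_smul_sandwich (hn : 0 < n) (i : Fin α) :
    theta α n hn i =
      (n : ℂ) • (fixFirst α n).sandwich ℂ (swap (Fin.castAdd n i) ⟨α, by omega⟩) := by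
  rw [theta, dosetElt_eq_smul_sandwich, card_fixFirst_inf_map_conj_swap hn,
    ← Nat.mul_factorial_pred hn.ne']
  congr 1
  push_cast
  exact mul_div_cancel_right₀ _ (Nat.cast_ne_zero.mpr (Nat.factorial_ne_zero _))

theorem dosetElt_swap_mul_swap_eq_smul_sandwich (hn : 1 < n) {i j : Fin α} (hij : i ≠ j) :
    dosetElt α n (swap (Fin.castAdd n i) ⟨α, by omega⟩ * swap (Fin.castAdd n j) ⟨α + 1, by omega⟩) =
      ((n : ℂ) * (n - 1)) • (fixFirst α n).sandwich ℂ
        (swap (Fin.castAdd n i) ⟨α, by omega⟩ * swap (Fin.castAdd n j) ⟨α + 1, by omega⟩) := by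
  rw [dosetElt_eq_smul_sandwich, card_fixFirst_inf_map_conj_swap_mul_swap hn hij]
  congr 1
  obtain ⟨m, rfl⟩ : ∃ m, n = m + 2 := ⟨n - 2, by omega⟩
  have hm : (m.factorial : ℂ) ≠ 0 := Nat.cast_ne_zero.mpr (Nat.factorial_ne_zero _)
  simp only [Nat.add_sub_cancel, Nat.factorial_succ]
  push_cast
  field_simp
  ring

theorem sum_sandwich_swap_mul_mul_swap (hn : 1 < n) {i j : Fin α} (hij : i ≠ j) :
    ∑ k ∈ (Set.toFinite (fixFirst α n : Set (Perm (Fin (α + n))))).toFinset,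
      (fixFirst α n).sandwich ℂ
        (swap (Fin.castAdd n j) ⟨α, by omega⟩ * k * swap (Fin.castAdd n i) ⟨α, by omega⟩) =
    (n - 1).factorial • (fixFirst α n).sandwich ℂ
        (swap (Fin.castAdd n i) (Fin.castAdd n j) * swap (Fin.castAdd n j) ⟨α, by omega⟩) +
      (n.factorial - (n - 1).factorial) • (fixFirst α n).sandwich ℂ
        (swap (Fin.castAdd n i) ⟨α, by omega⟩ * swap (Fin.castAdd n j) ⟨α + 1, by omega⟩) := by
  set s : Set (Fin (α + n)) := {x | (x : ℕ) < α}
  set a₀ : Fin (α + n) := ⟨α, by omega⟩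
  have hci : Fin.castAdd n i ∈ s := i.isLt
  have hcj : Fin.castAdd n j ∈ s := j.isLt
  have ha₀ : a₀ ∉ s := by simp [s, a₀]
  have ha₁ : (⟨α + 1, by omega⟩ : Fin (α + n)) ∉ s := by simp [s]
  have hcij : Fin.castAdd n i ≠ Fin.castAdd n j := (Fin.castAdd_injective _ _).ne hij
  have hK' : fixingSubgroup (Perm (Fin (α + n))) (insert a₀ s) ≤ fixFirst α n :=
    fixingSubgroup_antitone _ _ (Set.subset_insert _ _)
  rw [sum_eq_card_nsmul_add_card_sub_nsmul hK', card_fixFirst, insert_setOf_lt,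
    card_fixingSubgroup_setOf_lt, show α + n - (α + 1) = n - 1 by omega]
  · intro k hk
    rw [swap_mul_mul_swap_of_mem_fixingSubgroup_insert hci hcj ha₀ hcij hk, ← mul_one (k * _),
      sandwich_mul_mul (hK' hk) (one_mem _)]
  · intro k hk hk'
    have hk₀ : k a₀ ≠ a₀ := fun h => hk' <| (mem_fixingSubgroup_iff _).mpr <| by
      rintro x (rfl | hx)
      exacts [h, (mem_fixingSubgroup_iff _).mp hk x hx]
    obtain ⟨k₁, hk₁, k₂, hk₂, heq⟩ :=
      swap_mul_mul_swap_mem_doubleCoset hci hcj ha₀ ha₁ hcij (by simp [a₀, Fin.ext_iff]) hk hk₀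
    rw [heq, sandwich_mul_mul (K := fixFirst α n) hk₁ hk₂]

theorem theta_mul_theta (hn : 1 < n) {i j : Fin α} (hij : i ≠ j) :
    theta α n (by omega) j * theta α n (by omega) i =
      ((n : ℂ) * (n - 1)) • (fixFirst α n).sandwich ℂ
          (swap (Fin.castAdd n i) ⟨α, by omega⟩ * swap (Fin.castAdd n j) ⟨α + 1, by omega⟩) +
        (n : ℂ) • (fixFirst α n).sandwich ℂ
          (swap (Fin.castAdd n i) (Fin.castAdd n j) * swap (Fin.castAdd n j) ⟨α, by omega⟩) := by
  have hfac : (n.factorial : ℂ) = n * (n - 1).factorial := by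
    exact_mod_cast (Nat.mul_factorial_pred (by omega : n ≠ 0)).symm
  have hsub : ((n.factorial - (n - 1).factorial : ℕ) : ℂ) = n.factorial - (n - 1).factorial :=
    Nat.cast_sub (Nat.factorial_le (Nat.sub_le n 1))
  have hn₀ : (n : ℂ) ≠ 0 := Nat.cast_ne_zero.mpr (by omega)
  have hf : ((n - 1).factorial : ℂ) ≠ 0 := Nat.cast_ne_zero.mpr (Nat.factorial_ne_zero _)
  rw [theta_eq_smul_sandwich, theta_eq_smul_sandwich, smul_mul_smul_comm, sandwich_mul_sandwich,
    card_fixFirst, sum_sandwich_swap_mul_mul_swap hn hij, ← Nat.cast_smul_eq_nsmul ℂ,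
    ← Nat.cast_smul_eq_nsmul ℂ, hsub, hfac]
  match_scalars <;> field_simp

end

/-- In `C[S_n\S_{α+n}/S_n]` (with `n ≥ 2`), for distinct `i, j ≤ α` one has
`θ_j·θ_i = θ_{ij} + a((i j))·θ_j`, where `θ_{ij}` is `(1/n!)` times the sum of
delta functions over the double coset of `T_{ij} = (i,α+1)(j,α+2)`, whose
`α`-corner is the partial identity vanishing exactly at `i` and `j`. -/
theorem theta_mul (α n : ℕ) (hn : 2 ≤ n) (i j : Fin α) (hij : i ≠ j) :
    theta α n (by omega) j * theta α n (by omega) i =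
      dosetElt α n
          (Equiv.swap (Fin.castAdd n i) ⟨α, by omega⟩ *
            Equiv.swap (Fin.castAdd n j) ⟨α + 1, by omega⟩) +
        aElt α n (Equiv.swap i j) * theta α n (by omega) j := by
  have hcomm : ∀ k ∈ fixFirst α n, Commute (swap (Fin.castAdd n i) (Fin.castAdd n j)) k :=
    fun k hk => (commute_swap_of_apply_eq ((mem_fixingSubgroup_iff _).mp hk _ i.isLt)
      ((mem_fixingSubgroup_iff _).mp hk _ j.isLt)).symm
  rw [theta_mul_theta hn hij, dosetElt_swap_mul_swap_eq_smul_sandwich hn hij, aElt_eq,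
    viaFintypeEmbedding_swap, theta_eq_smul_sandwich, mul_smul_comm]
  congr 2
  exact (single_mul_average_mul_sandwich hcomm _).symm
end
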